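/- arXiv:2303.11067 — 2 statements merged into one kernel-verified Lean document; each statement's English description precedes it below -/
import Mathlib

section
/- Let ν̂, ω, ω′ be real numbers with ω′ > −ν̂ + ω and θ₀ ∈ (π/2, π). Then for every μ in the complement of the sector Σ(ω′; θ₀), the distance estimate |μ + ν̂ − ω| ≥ sin(θ₀) · |ω′ + ν̂ − ω| holds. -/
/-!
Put `z = μ - ω'` and `d = ω' + ν̂ - ω > 0`, so that `μ + ν̂ - ω = z + d` and, outside the sector,
`|arg z| < θ₀`. If `re z ≥ 0` then `‖z + d‖ ≥ re (z + d) ≥ d`. Otherwise `π/2 < |arg z| < θ₀`,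
so `sin θ₀ ≤ |sin (arg z)|`, and the distance from `-d` to the line through `0` and `z` is
`d |sin (arg z)| ≤ ‖z + d‖`.
-/

/-- The sector `Σ(a; θ₀) = { a + r e^{iθ} : r > 0, θ ∈ (-π, π], |θ| ≥ θ₀ }` in `ℂ`. -/
def Sector (a θ₀ : ℝ) : Set ℂ :=
  {z | ∃ r : ℝ, 0 < r ∧ ∃ θ : ℝ, θ ∈ Set.Ioc (-Real.pi) Real.pi ∧ θ₀ ≤ |θ| ∧
    z = (a : ℂ) + (r : ℂ) * Complex.exp ((θ : ℂ) * Complex.I)}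

open Real ComplexConjugate

open Complex (arg)

theorem mem_sector_of_le_abs_arg {a θ₀ : ℝ} {μ : ℂ} (hμ : μ ≠ a) (h : θ₀ ≤ |arg (μ - a)|) :
    μ ∈ Sector a θ₀ :=
  ⟨‖μ - a‖, norm_pos_iff.mpr (sub_ne_zero.mpr hμ), arg (μ - a),
    ⟨Complex.neg_pi_lt_arg _, Complex.arg_le_pi _⟩, h,
    by rw [Complex.norm_mul_exp_arg_mul_I]; ring⟩

theorem abs_arg_sub_lt_of_notMem_sector {a θ₀ : ℝ} {μ : ℂ} (hθ₀ : 0 < θ₀)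
    (hμ : μ ∉ Sector a θ₀) : |arg (μ - a)| < θ₀ := by
  by_contra! h
  rcases eq_or_ne μ a with rfl | hne
  · simp only [sub_self, Complex.arg_zero, abs_zero] at h
    exact h.not_gt hθ₀
  · exact hμ (mem_sector_of_le_abs_arg hne h)

theorem abs_im_mul_abs_le_norm_mul_norm_add_ofReal (z : ℂ) (d : ℝ) :
    |z.im| * |d| ≤ ‖z‖ * ‖z + d‖ := by
  have him : (conj z * (z + d)).im = -(d * z.im) := by
    simp only [Complex.mul_im, Complex.conj_re, Complex.conj_im, Complex.add_re, Complex.add_im,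
      Complex.ofReal_re, Complex.ofReal_im]
    ring
  calc |z.im| * |d| = |(conj z * (z + d)).im| := by rw [him, abs_neg, abs_mul, mul_comm]
    _ ≤ ‖conj z * (z + d)‖ := Complex.abs_im_le_norm _
    _ = ‖z‖ * ‖z + d‖ := by rw [norm_mul, Complex.norm_conj]

theorem abs_sin_arg_mul_le_norm_add_ofReal (z : ℂ) (d : ℝ) :
    |sin (arg z)| * |d| ≤ ‖z + d‖ := by
  rcases eq_or_ne z 0 with rfl | hz
  · simp
  · have hpos : 0 < ‖z‖ := norm_pos_iff.mpr hz
    rw [Complex.sin_arg, abs_div, abs_norm, div_mul_eq_mul_div, div_le_iff₀ hpos, mul_comm ‖z + d‖]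
    exact abs_im_mul_abs_le_norm_mul_norm_add_ofReal z d

theorem sin_le_sin_of_pi_div_two_le_of_le_pi {x y : ℝ} (hx : π / 2 ≤ x) (hxy : x ≤ y)
    (hy : y ≤ π) : sin y ≤ sin x := by
  rw [← sin_pi_sub x, ← sin_pi_sub y]
  exact sin_le_sin_of_le_of_le_pi_div_two (by linarith) (by linarith) (by linarith)

theorem sin_mul_le_norm_add_ofReal_of_abs_arg_le {z : ℂ} {d θ₀ : ℝ} (hd : 0 ≤ d)
    (hθ₀ : θ₀ ≤ π) (hz : |arg z| ≤ θ₀) : sin θ₀ * d ≤ ‖z + d‖ := by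
  by_cases hre : 0 ≤ z.re
  · calc sin θ₀ * d ≤ d := mul_le_of_le_one_left hd (sin_le_one _)
      _ ≤ (z + d).re := by simp only [Complex.add_re, Complex.ofReal_re]; linarith
      _ ≤ ‖z + d‖ := Complex.re_le_norm _
  · have hobtuse : π / 2 ≤ |arg z| := by
      by_contra! h
      exact hre (Complex.abs_arg_le_pi_div_two_iff.mp h.le)
    have hsin : sin θ₀ ≤ |sin (arg z)| := by
      rw [abs_sin_eq_sin_abs_of_abs_le_pi (Complex.abs_arg_le_pi z)]
      exact sin_le_sin_of_pi_div_two_le_of_le_pi hobtuse hz hθ₀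
    calc sin θ₀ * d ≤ |sin (arg z)| * |d| := by
          rw [abs_of_nonneg hd]; exact mul_le_mul_of_nonneg_right hsin hd
      _ ≤ ‖z + d‖ := abs_sin_arg_mul_le_norm_add_ofReal z d

/-- Let `ν̂, ω, ω′` be real with `ω′ > -ν̂ + ω` and `θ₀ ∈ (π/2, π)`.  Then every `μ`
in the complement of `Σ(ω′; θ₀)` satisfies `|μ + ν̂ - ω| ≥ sin θ₀ · |ω′ + ν̂ - ω|`. -/
theorem stmt_4 (νh ω ω' θ₀ : ℝ) (hω' : -νh + ω < ω')
    (hθ : θ₀ ∈ Set.Ioo (Real.pi / 2) Real.pi)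
    (μ : ℂ) (hμ : μ ∉ Sector ω' θ₀) :
    Real.sin θ₀ * |ω' + νh - ω| ≤ ‖μ + (νh : ℂ) - (ω : ℂ)‖ := by
  obtain ⟨hθ_gt, hθ_lt⟩ := hθ
  have hd : 0 < ω' + νh - ω := by linarith
  have hz : |arg (μ - ω')| < θ₀ :=
    abs_arg_sub_lt_of_notMem_sector (by linarith [pi_pos]) hμ
  have hsplit : μ + (νh : ℂ) - (ω : ℂ) = (μ - ω') + ((ω' + νh - ω : ℝ) : ℂ) := by
    push_cast; ring
  rw [abs_of_pos hd, hsplit]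
  exact sin_mul_le_norm_add_ofReal_of_abs_arg_le hd.le hθ_lt.le hz.le
end

section
/- Under the condition ν̂ := ν₀ − (|η₁|+1)/2 > 0 and η₀, β₀, κ > 0, all eigenvalues Λ_k^± = −((η₀+β₀)λ_k + κ + 2ν₀)/2 ± (1/2)√(((β₀−η₀)λ_k + κ)² − 4η₁) of the coupled operator A satisfy Re(Λ_k^±) ≤ −ν̂, where λ_k > 0 are the Dirichlet Laplacian eigenvalues. -/
lemma re_cpow_half (x : ℝ) : (((x:ℂ)) ^ ((1:ℂ)/2)).re = Real.sqrt x := by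
  rcases le_or_gt 0 x with hx | hx
  · have h2 : ((1:ℂ)/2) = ((1/2 : ℝ) : ℂ) := by norm_num
    rw [h2, ← Complex.ofReal_cpow hx, Complex.ofReal_re, Real.sqrt_eq_rpow]
  · have hz : (x:ℂ) ≠ 0 := by exact_mod_cast hx.ne
    rw [Complex.cpow_def_of_ne_zero hz, Complex.exp_re]
    have harg : (Complex.log x).im = Real.pi := by
      rw [Complex.log_im, Complex.arg_ofReal_of_neg hx]
    have : (Complex.log ↑x * (1 / 2)).im = Real.pi / 2 := by
      simp [Complex.mul_im, harg]
      ring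
    rw [this, Real.cos_pi_div_two, mul_zero, Real.sqrt_eq_zero_of_nonpos hx.le]


/-- `Λ^±(x) = -((η₀+β₀)x + κ + 2ν₀)/2 + s·(1/2)√(((β₀-η₀)x + κ)² - 4η₁)` with the
principal complex square root, `s = ±1`. -/
noncomputable def Lam (η₀ β₀ κ ν₀ η₁ s x : ℝ) : ℂ :=
  -((((η₀ + β₀) * x + κ + 2 * ν₀ : ℝ)) : ℂ) / 2
    + ((s : ℝ) : ℂ) * (1 / 2 : ℂ) *
      ((((β₀ - η₀) * x + κ) ^ 2 - 4 * η₁ : ℝ) : ℂ) ^ ((1 : ℂ) / 2)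

/-- Under `ν̂ := ν₀ - (|η₁|+1)/2 > 0` and `η₀, β₀, κ > 0`, all eigenvalues
`Λ_k^± = -((η₀+β₀)λ_k + κ + 2ν₀)/2 ± (1/2)√(((β₀-η₀)λ_k + κ)² - 4η₁)` of the coupled
operator satisfy `Re(Λ_k^±) ≤ -ν̂`, where `λ_k > 0` are the Dirichlet Laplacian
eigenvalues. -/
theorem stmt_10 (η₀ β₀ κ ν₀ η₁ : ℝ) (hη₀ : 0 < η₀) (hβ₀ : 0 < β₀) (hκ : 0 < κ)
    (hνh : 0 < ν₀ - (|η₁| + 1) / 2)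
    (lam : ℝ) (hlam : 0 < lam) :
    (Lam η₀ β₀ κ ν₀ η₁ 1 lam).re ≤ -(ν₀ - (|η₁| + 1) / 2) ∧
    (Lam η₀ β₀ κ ν₀ η₁ (-1) lam).re ≤ -(ν₀ - (|η₁| + 1) / 2) := by
  set a : ℝ := (η₀ + β₀) * lam + κ + 2 * ν₀ with ha
  set D : ℝ := ((β₀ - η₀) * lam + κ) ^ 2 - 4 * η₁ with hD
  have hre : ∀ s : ℝ, (Lam η₀ β₀ κ ν₀ η₁ s lam).re = -a/2 + s * (1/2) * Real.sqrt D := by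
    intro s
    simp [Lam, Complex.add_re, Complex.mul_re, Complex.div_re, Complex.ofReal_re,
      Complex.ofReal_im, re_cpow_half, ← ha, ← hD]
    left
    rw [show ((2:ℂ))⁻¹ = (1:ℂ)/2 by norm_num]
    exact re_cpow_half D
  have hDle : Real.sqrt D ≤ (η₀ + β₀) * lam + κ + |η₁| + 1 := by
    have h1 : D ≤ ((η₀ + β₀) * lam + κ + |η₁| + 1) ^ 2 := by
      have hb : |(β₀ - η₀) * lam + κ| ≤ (η₀ + β₀) * lam + κ := by
        rw [abs_le]
        constructor <;> nlinarith
      have hb2 : ((β₀ - η₀) * lam + κ) ^ 2 ≤ ((η₀ + β₀) * lam + κ) ^ 2 := by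
        nlinarith [abs_nonneg ((β₀ - η₀) * lam + κ), sq_abs ((β₀ - η₀) * lam + κ)]
      have h4 : -(4 * η₁) ≤ 4 * |η₁| := by
        have := neg_abs_le η₁; linarith
      nlinarith [abs_nonneg η₁, sq_nonneg (|η₁| - 1), mul_pos (add_pos hη₀ hβ₀) hlam]
    calc Real.sqrt D ≤ Real.sqrt (((η₀ + β₀) * lam + κ + |η₁| + 1) ^ 2) :=
          Real.sqrt_le_sqrt h1
      _ = (η₀ + β₀) * lam + κ + |η₁| + 1 := by
          rw [Real.sqrt_sq (by positivity)]
  have hDnn : 0 ≤ Real.sqrt D := Real.sqrt_nonneg D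
  constructor
  · rw [hre 1]
    have : (-a)/2 + 1 * (1/2) * Real.sqrt D ≤ -(ν₀ - (|η₁| + 1) / 2) := by
      rw [ha]; nlinarith
    linarith [this]
  · rw [hre (-1)]
    rw [ha]; nlinarith
end
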